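/- For every t > 0, each of the following four linear involutions of ℝ^{1,4} maps the 22-element set Q t := {P t ε : ε ∈ {-1,1}³} ∪ {N t ε : ε ∈ {-1,1}³} ∪ {A, B, C, D, E, F} onto itself: (i) L, which swaps coordinates 1 and 2; (ii) M, which swaps coordinates 2 and 3; (iii) N, which sends (v₀,v₁,v₂,v₃,v₄) to (v₀,v₁,-v₃,-v₂,v₄); and (iv) the roll symmetry R, which sends (v₀,v₁,v₂,v₃,v₄) to (v₀,v₁,v₂,-v₃,-v₄). (Hence the reflections L, M, N and the roll R remain symmetries of the deformed group ρ_t(Γ₂₂) for all t.) -/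
import Mathlib


/-- The positive octet space-like vectors of the deformed 24-cell (Table 6.1). -/
noncomputable def Pvec (t : ℝ) (ε : Fin 3 → ℝ) : Fin 5 → ℝ :=
  ![Real.sqrt 2, ε 0, ε 1, ε 2, (ε 0 * ε 1 * ε 2) / t]

/-- The negative octet space-like vectors of the deformed 24-cell (Table 6.1). -/
noncomputable def Nvec (t : ℝ) (ε : Fin 3 → ℝ) : Fin 5 → ℝ :=
  ![Real.sqrt 2, ε 0, ε 1, ε 2, -((ε 0 * ε 1 * ε 2) * t)]

/-- The letter vector `A`. -/
noncomputable def lA : Fin 5 → ℝ := ![1, Real.sqrt 2, 0, 0, 0]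
/-- The letter vector `B`. -/
noncomputable def lB : Fin 5 → ℝ := ![1, 0, Real.sqrt 2, 0, 0]
/-- The letter vector `C`. -/
noncomputable def lC : Fin 5 → ℝ := ![1, 0, 0, Real.sqrt 2, 0]
/-- The letter vector `D`. -/
noncomputable def lD : Fin 5 → ℝ := ![1, 0, 0, -Real.sqrt 2, 0]
/-- The letter vector `E`. -/
noncomputable def lE : Fin 5 → ℝ := ![1, 0, -Real.sqrt 2, 0, 0]
/-- The letter vector `F`. -/
noncomputable def lF : Fin 5 → ℝ := ![1, -Real.sqrt 2, 0, 0, 0]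

/-- The 22-element set of space-like vectors of the deformed configuration at time `t`. -/
noncomputable def Qset (t : ℝ) : Set (Fin 5 → ℝ) :=
  {q | ∃ ε : Fin 3 → ℝ, (∀ i, ε i = -1 ∨ ε i = 1) ∧ (q = Pvec t ε ∨ q = Nvec t ε)} ∪
    {lA, lB, lC, lD, lE, lF}

/-- The involution `L`, swapping coordinates 1 and 2. -/
def mapL (v : Fin 5 → ℝ) : Fin 5 → ℝ := ![v 0, v 2, v 1, v 3, v 4]
/-- The involution `M`, swapping coordinates 2 and 3. -/
def mapM (v : Fin 5 → ℝ) : Fin 5 → ℝ := ![v 0, v 1, v 3, v 2, v 4]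
/-- The involution `N`, swapping coordinates 2 and 3 while reversing their signs. -/
def mapN (v : Fin 5 → ℝ) : Fin 5 → ℝ := ![v 0, v 1, -v 3, -v 2, v 4]
/-- The roll symmetry `R`, negating coordinates 3 and 4. -/
def mapR (v : Fin 5 → ℝ) : Fin 5 → ℝ := ![v 0, v 1, v 2, -v 3, -v 4]

private lemma image_eq_self_of_invol {f : (Fin 5 → ℝ) → (Fin 5 → ℝ)}
    (hf : ∀ v, f (f v) = v) {S : Set (Fin 5 → ℝ)} (h : ∀ x ∈ S, f x ∈ S) :
    f '' S = S := by
  apply subset_antisymm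
  · rintro _ ⟨x, hx, rfl⟩; exact h x hx
  · intro x hx; exact ⟨f x, h x hx, hf x⟩

private lemma sign_cases {ε : Fin 3 → ℝ} (hε : ∀ i, ε i = -1 ∨ ε i = 1)
    (a b c : Fin 3) : ∀ i, (![ε a, ε b, ε c] : Fin 3 → ℝ) i = -1 ∨ ![ε a, ε b, ε c] i = 1 := by
  intro i; fin_cases i <;> simp [hε a, hε b, hε c]

private lemma sign_cases_neg {ε : Fin 3 → ℝ} (hε : ∀ i, ε i = -1 ∨ ε i = 1) (a : Fin 3) :
    -ε a = -1 ∨ -ε a = 1 := by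
  rcases hε a with h | h <;> simp [h]

private lemma mapL_lA : mapL lA = lB := by
  funext i; fin_cases i <;> simp [mapL, lA, lB]
private lemma mapL_lB : mapL lB = lA := by
  funext i; fin_cases i <;> simp [mapL, lB, lA]
private lemma mapL_lC : mapL lC = lC := by
  funext i; fin_cases i <;> simp [mapL, lC, lC]
private lemma mapL_lD : mapL lD = lD := by
  funext i; fin_cases i <;> simp [mapL, lD, lD]
private lemma mapL_lE : mapL lE = lF := by
  funext i; fin_cases i <;> simp [mapL, lE, lF]
private lemma mapL_lF : mapL lF = lE := by
  funext i; fin_cases i <;> simp [mapL, lF, lE]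
private lemma mapM_lA : _root_.mapM lA = lA := by
  funext i; fin_cases i <;> simp [_root_.mapM, lA, lA]
private lemma mapM_lB : _root_.mapM lB = lC := by
  funext i; fin_cases i <;> simp [_root_.mapM, lB, lC]
private lemma mapM_lC : _root_.mapM lC = lB := by
  funext i; fin_cases i <;> simp [_root_.mapM, lC, lB]
private lemma mapM_lD : _root_.mapM lD = lE := by
  funext i; fin_cases i <;> simp [_root_.mapM, lD, lE]
private lemma mapM_lE : _root_.mapM lE = lD := by
  funext i; fin_cases i <;> simp [_root_.mapM, lE, lD]
private lemma mapM_lF : _root_.mapM lF = lF := by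
  funext i; fin_cases i <;> simp [_root_.mapM, lF, lF]
private lemma mapN_lA : mapN lA = lA := by
  funext i; fin_cases i <;> simp [mapN, lA, lA]
private lemma mapN_lB : mapN lB = lD := by
  funext i; fin_cases i <;> simp [mapN, lB, lD]
private lemma mapN_lC : mapN lC = lE := by
  funext i; fin_cases i <;> simp [mapN, lC, lE]
private lemma mapN_lD : mapN lD = lB := by
  funext i; fin_cases i <;> simp [mapN, lD, lB]
private lemma mapN_lE : mapN lE = lC := by
  funext i; fin_cases i <;> simp [mapN, lE, lC]
private lemma mapN_lF : mapN lF = lF := by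
  funext i; fin_cases i <;> simp [mapN, lF, lF]
private lemma mapR_lA : mapR lA = lA := by
  funext i; fin_cases i <;> simp [mapR, lA, lA]
private lemma mapR_lB : mapR lB = lB := by
  funext i; fin_cases i <;> simp [mapR, lB, lB]
private lemma mapR_lC : mapR lC = lD := by
  funext i; fin_cases i <;> simp [mapR, lC, lD]
private lemma mapR_lD : mapR lD = lC := by
  funext i; fin_cases i <;> simp [mapR, lD, lC]
private lemma mapR_lE : mapR lE = lE := by
  funext i; fin_cases i <;> simp [mapR, lE, lE]
private lemma mapR_lF : mapR lF = lF := by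
  funext i; fin_cases i <;> simp [mapR, lF, lF]

/-- The reflective symmetries `L`, `M`, `N` and the roll symmetry `R` map the set of
deformed space-like vectors onto itself for every `t > 0`; hence they remain symmetries
of the deformed group `ρ_t(Γ₂₂)` for all `t`. -/
theorem symmetries_preserved (t : ℝ) (ht : 0 < t) :
    mapL '' Qset t = Qset t ∧ mapM '' Qset t = Qset t ∧
    mapN '' Qset t = Qset t ∧ mapR '' Qset t = Qset t := by
  have hL : ∀ x ∈ Qset t, mapL x ∈ Qset t := by
    rintro q (⟨ε, hε, (rfl | rfl)⟩ | hq)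
    · exact Or.inl ⟨![ε 1, ε 0, ε 2], (by intro i; fin_cases i <;> first | exact hε 0 | exact hε 1 | exact hε 2 | exact sign_cases_neg hε 0 | exact sign_cases_neg hε 1 | exact sign_cases_neg hε 2),
        Or.inl (by funext i; fin_cases i <;>
          simp [mapL, Pvec, mul_comm, mul_left_comm, mul_assoc, neg_div])⟩
    · exact Or.inl ⟨![ε 1, ε 0, ε 2], (by intro i; fin_cases i <;> first | exact hε 0 | exact hε 1 | exact hε 2 | exact sign_cases_neg hε 0 | exact sign_cases_neg hε 1 | exact sign_cases_neg hε 2),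
        Or.inr (by funext i; fin_cases i <;>
          simp [mapL, Nvec, mul_comm, mul_left_comm, mul_assoc, neg_div])⟩
    · simp only [Set.mem_insert_iff, Set.mem_singleton_iff] at hq
      rcases hq with rfl | rfl | rfl | rfl | rfl | rfl
      · exact Or.inr (by rw [mapL_lA]; simp)
      · exact Or.inr (by rw [mapL_lB]; simp)
      · exact Or.inr (by rw [mapL_lC]; simp)
      · exact Or.inr (by rw [mapL_lD]; simp)
      · exact Or.inr (by rw [mapL_lE]; simp)
      · exact Or.inr (by rw [mapL_lF]; simp)
  have hM : ∀ x ∈ Qset t, _root_.mapM x ∈ Qset t := by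
    rintro q (⟨ε, hε, (rfl | rfl)⟩ | hq)
    · exact Or.inl ⟨![ε 0, ε 2, ε 1], (by intro i; fin_cases i <;> first | exact hε 0 | exact hε 1 | exact hε 2 | exact sign_cases_neg hε 0 | exact sign_cases_neg hε 1 | exact sign_cases_neg hε 2),
        Or.inl (by funext i; fin_cases i <;>
          simp [_root_.mapM, Pvec, mul_comm, mul_left_comm, mul_assoc, neg_div])⟩
    · exact Or.inl ⟨![ε 0, ε 2, ε 1], (by intro i; fin_cases i <;> first | exact hε 0 | exact hε 1 | exact hε 2 | exact sign_cases_neg hε 0 | exact sign_cases_neg hε 1 | exact sign_cases_neg hε 2),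
        Or.inr (by funext i; fin_cases i <;>
          simp [_root_.mapM, Nvec, mul_comm, mul_left_comm, mul_assoc, neg_div])⟩
    · simp only [Set.mem_insert_iff, Set.mem_singleton_iff] at hq
      rcases hq with rfl | rfl | rfl | rfl | rfl | rfl
      · exact Or.inr (by rw [mapM_lA]; simp)
      · exact Or.inr (by rw [mapM_lB]; simp)
      · exact Or.inr (by rw [mapM_lC]; simp)
      · exact Or.inr (by rw [mapM_lD]; simp)
      · exact Or.inr (by rw [mapM_lE]; simp)
      · exact Or.inr (by rw [mapM_lF]; simp)
  have hN : ∀ x ∈ Qset t, mapN x ∈ Qset t := by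
    rintro q (⟨ε, hε, (rfl | rfl)⟩ | hq)
    · exact Or.inl ⟨![ε 0, -ε 2, -ε 1], (by intro i; fin_cases i <;> first | exact hε 0 | exact hε 1 | exact hε 2 | exact sign_cases_neg hε 0 | exact sign_cases_neg hε 1 | exact sign_cases_neg hε 2),
        Or.inl (by funext i; fin_cases i <;>
          simp [mapN, Pvec, mul_comm, mul_left_comm, mul_assoc, neg_div])⟩
    · exact Or.inl ⟨![ε 0, -ε 2, -ε 1], (by intro i; fin_cases i <;> first | exact hε 0 | exact hε 1 | exact hε 2 | exact sign_cases_neg hε 0 | exact sign_cases_neg hε 1 | exact sign_cases_neg hε 2),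
        Or.inr (by funext i; fin_cases i <;>
          simp [mapN, Nvec, mul_comm, mul_left_comm, mul_assoc, neg_div])⟩
    · simp only [Set.mem_insert_iff, Set.mem_singleton_iff] at hq
      rcases hq with rfl | rfl | rfl | rfl | rfl | rfl
      · exact Or.inr (by rw [mapN_lA]; simp)
      · exact Or.inr (by rw [mapN_lB]; simp)
      · exact Or.inr (by rw [mapN_lC]; simp)
      · exact Or.inr (by rw [mapN_lD]; simp)
      · exact Or.inr (by rw [mapN_lE]; simp)
      · exact Or.inr (by rw [mapN_lF]; simp)
  have hR : ∀ x ∈ Qset t, mapR x ∈ Qset t := by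
    rintro q (⟨ε, hε, (rfl | rfl)⟩ | hq)
    · exact Or.inl ⟨![ε 0, ε 1, -ε 2], (by intro i; fin_cases i <;> first | exact hε 0 | exact hε 1 | exact hε 2 | exact sign_cases_neg hε 0 | exact sign_cases_neg hε 1 | exact sign_cases_neg hε 2),
        Or.inl (by funext i; fin_cases i <;>
          simp [mapR, Pvec, mul_comm, mul_left_comm, mul_assoc, neg_div])⟩
    · exact Or.inl ⟨![ε 0, ε 1, -ε 2], (by intro i; fin_cases i <;> first | exact hε 0 | exact hε 1 | exact hε 2 | exact sign_cases_neg hε 0 | exact sign_cases_neg hε 1 | exact sign_cases_neg hε 2),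
        Or.inr (by funext i; fin_cases i <;>
          simp [mapR, Nvec, mul_comm, mul_left_comm, mul_assoc, neg_div])⟩
    · simp only [Set.mem_insert_iff, Set.mem_singleton_iff] at hq
      rcases hq with rfl | rfl | rfl | rfl | rfl | rfl
      · exact Or.inr (by rw [mapR_lA]; simp)
      · exact Or.inr (by rw [mapR_lB]; simp)
      · exact Or.inr (by rw [mapR_lC]; simp)
      · exact Or.inr (by rw [mapR_lD]; simp)
      · exact Or.inr (by rw [mapR_lE]; simp)
      · exact Or.inr (by rw [mapR_lF]; simp)
  refine ⟨image_eq_self_of_invol ?_ hL, image_eq_self_of_invol ?_ hM,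
    image_eq_self_of_invol ?_ hN, image_eq_self_of_invol ?_ hR⟩ <;>
    · intro v; funext i; fin_cases i <;> simp [mapL, _root_.mapM, mapN, mapR]
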